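/- arXiv:1610.00450 — 3 statements merged into one kernel-verified Lean document; each statement's English description precedes it below -/
import Mathlib

section
/- Let G be a prefix-recognizable graph over an alphabet A in which every vertex has finite out-degree, with vertex set a regular language V ⊆ C* and each edge relation a finite union of relations of the form U·(V×W) with U,V,W regular and all W finite. Then for every infinite path u_0, u_1, u_2, … in G there exists a constant K ≥ 0 such that the out-degree of u_i is at most K·(i+1) for all i ≥ 0. -/
/-!
Every edge `x → y` of the graph keeps a prefix of `x` and replaces the rest by a word of the
finite set `S = ⋃ W a i`. Hence the out-degree of `x` is at most `|A| · (|x| + 1) · |S|` (a label,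
a cut point and a replacement word), and along a path the length of the vertices grows by at most
`max {|w| : w ∈ S}` per step, so `|u i|` and with it the out-degree of `u i` grow linearly in `i`.
-/

section PrefixReplacement

variable {C : Type*}

def prefixReplacements (S : Set (List C)) (x : List C) : Set (List C) :=
  {y | ∃ u v w, x = u ++ v ∧ w ∈ S ∧ y = u ++ w}

lemma prefixReplacements_subset_image (S : Set (List C)) (x : List C) :
    prefixReplacements S x ⊆
      (fun q : ℕ × List C => x.take q.1 ++ q.2) '' (Set.Iic x.length ×ˢ S) := by
  rintro y ⟨u, v, w, rfl, hw, rfl⟩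
  exact ⟨(u.length, w), ⟨by simp, hw⟩, by simp⟩

lemma ncard_prefixReplacements_le {S : Set (List C)} (hS : S.Finite) (x : List C) :
    (prefixReplacements S x).ncard ≤ (x.length + 1) * S.ncard := by
  have hfin : (Set.Iic x.length ×ˢ S).Finite := (Set.finite_Iic _).prod hS
  calc (prefixReplacements S x).ncard
      ≤ ((fun q : ℕ × List C => x.take q.1 ++ q.2) '' (Set.Iic x.length ×ˢ S)).ncard :=
        Set.ncard_le_ncard (prefixReplacements_subset_image S x) (hfin.image _)
    _ ≤ (Set.Iic x.length ×ˢ S).ncard := Set.ncard_image_le hfin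
    _ = (x.length + 1) * S.ncard := by simp [Set.ncard_prod]

lemma finite_prefixReplacements {S : Set (List C)} (hS : S.Finite) (x : List C) :
    (prefixReplacements S x).Finite :=
  (((Set.finite_Iic _).prod hS).image _).subset (prefixReplacements_subset_image S x)

lemma length_le_of_mem_prefixReplacements {S : Set (List C)} {M : ℕ}
    (hM : ∀ w ∈ S, w.length ≤ M) {x y : List C} (hy : y ∈ prefixReplacements S x) :
    y.length ≤ x.length + M := by
  obtain ⟨u, v, w, rfl, hw, rfl⟩ := hy
  simp only [List.length_append]
  linarith [hM w hw]

lemma length_le_of_forall_mem_prefixReplacements {S : Set (List C)} {M : ℕ}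
    (hM : ∀ w ∈ S, w.length ≤ M) {u : ℕ → List C}
    (hu : ∀ i, u (i + 1) ∈ prefixReplacements S (u i)) (i : ℕ) :
    (u i).length ≤ (u 0).length + M * i := by
  induction i with
  | zero => simp
  | succ i ih =>
    have := length_le_of_mem_prefixReplacements hM (hu i)
    rw [Nat.mul_succ]
    omega

lemma ncard_labelledSuccessors_le {A : Type*} [Fintype A]
    {E : A → List C → List C → Prop} {S : Set (List C)} (hS : S.Finite)
    (hE : ∀ a x y, E a x y → y ∈ prefixReplacements S x) (x : List C) :
    {p : A × List C | E p.1 x p.2}.ncard ≤ Fintype.card A * ((x.length + 1) * S.ncard) := by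
  have hsub : {p : A × List C | E p.1 x p.2} ⊆ Set.univ ×ˢ prefixReplacements S x :=
    fun p hp => ⟨trivial, hE _ _ _ hp⟩
  calc {p : A × List C | E p.1 x p.2}.ncard
      ≤ (Set.univ ×ˢ prefixReplacements S x).ncard :=
        Set.ncard_le_ncard hsub (Set.finite_univ.prod (finite_prefixReplacements hS x))
    _ = Fintype.card A * (prefixReplacements S x).ncard := by
        rw [Set.ncard_prod, Set.ncard_univ, Nat.card_eq_fintype_card]
    _ ≤ Fintype.card A * ((x.length + 1) * S.ncard) :=
        Nat.mul_le_mul_left _ (ncard_prefixReplacements_le hS x)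
end PrefixReplacement

theorem prefixRecognizable_outDegree_linear_on_paths_general
    {C A : Type} [Fintype A]
    (Vert : Language C)
    (n : A → ℕ)
    (U Vl W : (a : A) → Fin (n a) → Language C)
    (hWfin : ∀ a i, (W a i : Set (List C)).Finite)
    -- the edge relation of the graph
    (E : A → List C → List C → Prop)
    (hE : ∀ a x y, E a x y ↔
      x ∈ Vert ∧ y ∈ Vert ∧
      ∃ i : Fin (n a), ∃ u v w : List C,
        u ∈ U a i ∧ v ∈ Vl a i ∧ w ∈ W a i ∧ x = u ++ v ∧ y = u ++ w)
    -- an infinite path in the graph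
    (u : ℕ → List C) (hpath : ∀ i : ℕ, ∃ a : A, E a (u i) (u (i + 1))) :
    ∃ K : ℕ, ∀ i : ℕ, {p : A × List C | E p.1 (u i) p.2}.ncard ≤ K * (i + 1) := by
  set S : Set (List C) := ⋃ a, ⋃ i, (W a i : Set (List C))
  have hS : S.Finite := Set.finite_iUnion fun a => Set.finite_iUnion (hWfin a)
  have hstep : ∀ a x y, E a x y → y ∈ prefixReplacements S x := by
    intro a x y hxy
    obtain ⟨-, -, i, v, v', w, -, -, hw, rfl, rfl⟩ := (hE a x y).1 hxy
    exact ⟨v, v', w, rfl, Set.mem_iUnion₂.2 ⟨a, i, hw⟩, rfl⟩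
  obtain ⟨M, hM⟩ : ∃ M, ∀ w ∈ S, w.length ≤ M :=
    (hS.image List.length).bddAbove.imp fun _ hM w hw => hM ⟨w, hw, rfl⟩
  have hlen := length_le_of_forall_mem_prefixReplacements hM fun i =>
    (hpath i).elim fun a ha => hstep a _ _ ha
  refine ⟨Fintype.card A * S.ncard * ((u 0).length + M + 1), fun i => ?_⟩
  calc {p : A × List C | E p.1 (u i) p.2}.ncard
      ≤ Fintype.card A * (((u i).length + 1) * S.ncard) :=
        ncard_labelledSuccessors_le hS hstep (u i)
    _ ≤ Fintype.card A * S.ncard * ((u 0).length + M + 1) * (i + 1) := by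
        have : (u i).length + 1 ≤ ((u 0).length + M + 1) * (i + 1) := by nlinarith [hlen i]
        calc Fintype.card A * (((u i).length + 1) * S.ncard)
            = Fintype.card A * S.ncard * ((u i).length + 1) := by ring
          _ ≤ Fintype.card A * S.ncard * (((u 0).length + M + 1) * (i + 1)) := by gcongr
          _ = _ := by ring

/-- In a prefix-recognizable graph (vertex set a regular language `Vert ⊆ C*`,
each edge relation a finite union of relations `U·(V×W)` with `U, V, W`
regular and, since out-degrees are finite, all `W` finite), the out-degree of
the `i`-th vertex of any infinite path is bounded by `K·(i+1)` for some
constant `K`. -/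
theorem prefixRecognizable_outDegree_linear_on_paths
    {C A : Type} [Fintype A]
    (Vert : Language C) (hVert : Vert.IsRegular)
    (n : A → ℕ)
    (U Vl W : (a : A) → Fin (n a) → Language C)
    (hU : ∀ a i, (U a i).IsRegular)
    (hVl : ∀ a i, (Vl a i).IsRegular)
    (hWreg : ∀ a i, (W a i).IsRegular)
    (hWfin : ∀ a i, (W a i : Set (List C)).Finite)
    -- the edge relation of the graph
    (E : A → List C → List C → Prop)
    (hE : ∀ a x y, E a x y ↔
      x ∈ Vert ∧ y ∈ Vert ∧
      ∃ i : Fin (n a), ∃ u v w : List C,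
        u ∈ U a i ∧ v ∈ Vl a i ∧ w ∈ W a i ∧ x = u ++ v ∧ y = u ++ w)
    -- every vertex has finite out-degree
    (hfin : ∀ x : List C, {p : A × List C | E p.1 x p.2}.Finite)
    -- an infinite path in the graph
    (u : ℕ → List C) (hpath : ∀ i : ℕ, ∃ a : A, E a (u i) (u (i + 1))) :
    ∃ K : ℕ, ∀ i : ℕ, {p : A × List C | E p.1 (u i) p.2}.ncard ≤ K * (i + 1) :=
  prefixRecognizable_outDegree_linear_on_paths_general Vert n U Vl W hWfin E hE u hpath
end

section
/- Contraction commutes with unfolding under a uniqueness condition: let H be a graph labelled in A ⊎ B with root r such that for every a ∈ A and any two vertices u, v there is at most one path from u to v labelled by a word in B*a. Then the B-contraction of the unfolding of H from r is isomorphic to the unfolding from r of the B-contraction of H. -/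
/-- A rooted edge-labelled graph with labels in `L`. -/
structure LGraph (L : Type) where
  V : Type
  root : V
  edge : V → L → V → Prop

namespace LGraph

variable {L A B : Type}

/-- Reachability along edges. -/
def Reaches (G : LGraph L) (u v : G.V) : Prop :=
  Relation.ReflTransGen (fun x y => ∃ l, G.edge x l y) u v

/-- The vertices reachable from the root. -/
def Rt (G : LGraph L) : Type := {v : G.V // G.Reaches G.root v}

/-- An isomorphism between (the reachable parts of) two rooted labelled
graphs: a bijection on vertices preserving the root, the edges and the
labels. -/
structure Isomorphism (G H : LGraph L) where
  toEquiv : G.Rt ≃ H.Rt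
  map_root : (toEquiv ⟨G.root, Relation.ReflTransGen.refl⟩).1 = H.root
  map_edge : ∀ (u v : G.Rt) (l : L),
    G.edge u.1 l v.1 ↔ H.edge (toEquiv u).1 l (toEquiv v).1

def Isomorphic (G H : LGraph L) : Prop := Nonempty (G.Isomorphism H)

/-- Bisimilarity of rooted labelled graphs. -/
def Bisimilar (G H : LGraph L) : Prop :=
  ∃ R : G.V → H.V → Prop,
    R G.root H.root ∧
    (∀ u u', R u u' → ∀ l v, G.edge u l v → ∃ v', H.edge u' l v' ∧ R v v') ∧
    (∀ u u', R u u' → ∀ l v', H.edge u' l v' → ∃ v, G.edge u l v ∧ R v v')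

/-- Paths labelled only by letters of `B`. -/
def BStar (G : LGraph (A ⊕ B)) : G.V → G.V → Prop :=
  Relation.ReflTransGen (fun x y => ∃ b : B, G.edge x (Sum.inr b) y)

/-- The `B`-contraction of a graph labelled in `A ⊕ B`: it has an `a`-labelled
edge from `u` to `v` whenever there is a path from `u` to `v` labelled by a
word in `B*a`; its (reachable) vertices are the root together with the
targets of `A`-labelled edges. -/
def contraction (G : LGraph (A ⊕ B)) : LGraph A where
  V := G.V
  root := G.root
  edge u a v := ∃ w, G.BStar u w ∧ G.edge w (Sum.inl a) v

/-- The state reached at the end of a path encoded as a list of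
(label, vertex) steps. -/
def endV (G : LGraph L) (p : List (L × G.V)) : G.V :=
  p.foldl (fun _ step => step.2) G.root

/-- The unfolding of `G` from its root: the tree of finite paths from the
root, with an `l`-labelled edge from `π` to `π'` when `π'` extends `π` by one
`l`-labelled edge. -/
def unfold (G : LGraph L) : LGraph L where
  V := List (L × G.V)
  root := []
  edge p l q := ∃ v : G.V, q = p ++ [(l, v)] ∧ G.edge (G.endV p) l v

/-- `G.IsPathFrom u p` : the list of steps `p` is a path in `G` starting at
`u`. -/
def IsPathFrom (G : LGraph L) : G.V → List (L × G.V) → Prop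
  | _, [] => True
  | u, s :: rest => G.edge u s.1 s.2 ∧ G.IsPathFrom s.2 rest

/-- `G.PathBA a u v p` : `p` is a path from `u` to `v` whose label word lies
in `B*a`. -/
def PathBA (G : LGraph (A ⊕ B)) (a : A) (u v : G.V)
    (p : List ((A ⊕ B) × G.V)) : Prop :=
  G.IsPathFrom u p ∧
  ∃ q, p = q ++ [(Sum.inl a, v)] ∧ ∀ s ∈ q, ∃ b : B, s.1 = Sum.inr b

end LGraph

open LGraph

/-!
Every vertex of the `B`-contraction of `Unf(H)` that is reachable from the root is a path of `H`
cut into consecutive `B*a`-blocks, and erasing its `B`-steps gives a path of the contraction of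
`H`, i.e. a vertex of its unfolding. Every path of the contraction lifts to such a block
decomposition, and by the uniqueness condition the lift is unique block by block; so erasure is a
bijection on reachable vertices, and it matches `a`-edges (one more block) on both sides.
-/

namespace LGraph

variable {L A B : Type}

def Step (G : LGraph L) (R : L → Prop) (x y : G.V) : Prop :=
  ∃ l, R l ∧ G.edge x l y

theorem reaches_iff_reflTransGen_step (G : LGraph L) {u v : G.V} :
    G.Reaches u v ↔ Relation.ReflTransGen (G.Step fun _ => True) u v := by
  have : (G.Step fun _ => True) = fun x y => ∃ l, G.edge x l y := by ext; simp [Step]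
  rw [this]; rfl

theorem bStar_iff_reflTransGen_step (G : LGraph (A ⊕ B)) {u v : G.V} :
    G.BStar u v ↔ Relation.ReflTransGen (G.Step fun l => ∃ b, l = Sum.inr b) u v := by
  have : (G.Step fun l => ∃ b, l = Sum.inr b) = fun x y => ∃ b, G.edge x (.inr b) y := by
    ext; simp [Step]
  rw [this]; rfl

def pathEnd {V : Type} (u : V) (p : List (L × V)) : V :=
  p.foldl (fun _ s => s.2) u

theorem pathEnd_append {V : Type} (u : V) (p q : List (L × V)) :
    pathEnd u (p ++ q) = pathEnd (pathEnd u p) q :=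
  List.foldl_append ..

@[simp]
theorem pathEnd_concat {V : Type} (u : V) (p : List (L × V)) (s : L × V) :
    pathEnd u (p ++ [s]) = s.2 := by
  rw [pathEnd_append]; rfl

theorem endV_append (G : LGraph L) (p q : List (L × G.V)) :
    G.endV (p ++ q) = pathEnd (G.endV p) q :=
  pathEnd_append ..

theorem isPathFrom_append (G : LGraph L) (u : G.V) (p q : List (L × G.V)) :
    G.IsPathFrom u (p ++ q) ↔ G.IsPathFrom u p ∧ G.IsPathFrom (pathEnd u p) q := by
  induction p generalizing u with
  | nil => simp [IsPathFrom, pathEnd]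
  | cons s p ih => simp only [List.cons_append, IsPathFrom, ih, and_assoc]; rfl

theorem isPathFrom_concat (G : LGraph L) (u : G.V) (p : List (L × G.V)) (s : L × G.V) :
    G.IsPathFrom u (p ++ [s]) ↔ G.IsPathFrom u p ∧ G.edge (pathEnd u p) s.1 s.2 := by
  simp [isPathFrom_append, IsPathFrom]

theorem reflTransGen_step_iff (G : LGraph L) (R : L → Prop) (u w : G.V) :
    Relation.ReflTransGen (G.Step R) u w ↔
      ∃ p, G.IsPathFrom u p ∧ (∀ s ∈ p, R s.1) ∧ pathEnd u p = w := by
  constructor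
  · intro h
    induction h with
    | refl => exact ⟨[], trivial, by simp, rfl⟩
    | @tail x y _ hstep ih =>
      obtain ⟨p, hp, hR, rfl⟩ := ih
      obtain ⟨l, hl, he⟩ := hstep
      refine ⟨p ++ [(l, y)], (G.isPathFrom_concat ..).2 ⟨hp, he⟩, ?_, pathEnd_concat ..⟩
      exact List.forall_mem_append.2 ⟨hR, by simpa using hl⟩
  · rintro ⟨p, hp, hR, rfl⟩
    induction p using List.reverseRecOn with
    | nil => exact .refl
    | append_singleton p s ih =>
      rw [isPathFrom_concat] at hp
      rw [pathEnd_concat]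
      exact .tail (ih hp.1 fun t ht => hR t (by simp [ht])) ⟨s.1, hR s (by simp), hp.2⟩

theorem unfold_reflTransGen_step_iff (G : LGraph L) (R : L → Prop) (p q : List (L × G.V)) :
    Relation.ReflTransGen (G.unfold.Step R) p q ↔
      ∃ r, q = p ++ r ∧ G.IsPathFrom (G.endV p) r ∧ ∀ s ∈ r, R s.1 := by
  constructor
  · intro h
    induction h with
    | refl => exact ⟨[], by simp, trivial, by simp⟩
    | tail _ hstep ih =>
      obtain ⟨r, rfl, hr, hR⟩ := ih
      obtain ⟨l, hl, v, rfl, he⟩ := hstep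
      refine ⟨r ++ [(l, v)], by simp, (G.isPathFrom_concat ..).2 ⟨hr, ?_⟩, ?_⟩
      · rwa [endV_append] at he
      · exact List.forall_mem_append.2 ⟨hR, by simpa using hl⟩
  · rintro ⟨r, rfl, hr, hR⟩
    induction r using List.reverseRecOn with
    | nil => simpa using .refl
    | append_singleton r s ih =>
      rw [isPathFrom_concat] at hr
      refine .tail (ih hr.1 fun t ht => hR t (by simp [ht])) ⟨s.1, hR s (by simp), s.2, ?_, ?_⟩
      · simp
      · rw [endV_append]; exact hr.2

theorem unfold_reaches_root_iff (G : LGraph L) (p : List (L × G.V)) :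
    G.unfold.Reaches G.unfold.root p ↔ G.IsPathFrom G.root p := by
  refine G.unfold.reaches_iff_reflTransGen_step.trans
    ((G.unfold_reflTransGen_step_iff _ [] p).trans ?_)
  simp [endV]

theorem contraction_edge_iff (G : LGraph (A ⊕ B)) (u v : G.V) (a : A) :
    G.contraction.edge u a v ↔ ∃ p, G.PathBA a u v p := by
  constructor
  · rintro ⟨w, hw, he⟩
    obtain ⟨r, hr, hR, rfl⟩ :=
      (G.reflTransGen_step_iff _ u w).1 (G.bStar_iff_reflTransGen_step.1 hw)
    exact ⟨r ++ [(.inl a, v)], (G.isPathFrom_concat ..).2 ⟨hr, he⟩, r, rfl, hR⟩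
  · rintro ⟨_, hp, r, rfl, hR⟩
    rw [isPathFrom_concat] at hp
    exact ⟨pathEnd u r, G.bStar_iff_reflTransGen_step.2
      ((G.reflTransGen_step_iff _ _ _).2 ⟨r, hp.1, hR, rfl⟩), hp.2⟩

theorem contraction_unfold_edge_iff (G : LGraph (A ⊕ B)) (p q : List ((A ⊕ B) × G.V)) (a : A) :
    G.unfold.contraction.edge p a q ↔ ∃ v r, q = p ++ r ∧ G.PathBA a (G.endV p) v r := by
  constructor
  · rintro ⟨w, hw, v, rfl, he⟩
    obtain ⟨r, rfl, hr, hR⟩ :=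
      (G.unfold_reflTransGen_step_iff _ p w).1 (G.unfold.bStar_iff_reflTransGen_step.1 hw)
    rw [endV_append] at he
    exact ⟨v, r ++ [(.inl a, v)], by simp, (G.isPathFrom_concat ..).2 ⟨hr, he⟩, r, rfl, hR⟩
  · rintro ⟨v, _, rfl, hp, r, rfl, hR⟩
    rw [isPathFrom_concat] at hp
    refine ⟨p ++ r, G.unfold.bStar_iff_reflTransGen_step.2
      ((G.unfold_reflTransGen_step_iff _ _ _).2 ⟨r, rfl, hp.1, hR⟩), v, by simp, ?_⟩
    rw [endV_append]; exact hp.2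

theorem PathBA.pathEnd_eq {G : LGraph (A ⊕ B)} {a : A} {u v : G.V} {p : List ((A ⊕ B) × G.V)}
    (h : G.PathBA a u v p) (w : G.V) : pathEnd w p = v := by
  obtain ⟨_, r, rfl, _⟩ := h
  exact pathEnd_concat ..

def contractPath {V : Type} (p : List ((A ⊕ B) × V)) : List (A × V) :=
  p.filterMap fun s => s.1.elim (fun a => some (a, s.2)) fun _ => none

theorem contractPath_append {V : Type} (p q : List ((A ⊕ B) × V)) :
    contractPath (p ++ q) = contractPath p ++ contractPath q :=
  List.filterMap_append ..

theorem PathBA.contractPath_eq {G : LGraph (A ⊕ B)} {a : A} {u v : G.V}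
    {p : List ((A ⊕ B) × G.V)} (h : G.PathBA a u v p) : contractPath p = [(a, v)] := by
  obtain ⟨_, r, rfl, hR⟩ := h
  have hr : contractPath r = [] := List.filterMap_eq_nil_iff.2 fun s hs => by
    obtain ⟨b, hb⟩ := hR s hs
    rw [hb]; rfl
  rw [contractPath_append, hr]; rfl

inductive IsBlockPath (G : LGraph (A ⊕ B)) (u : G.V) : List ((A ⊕ B) × G.V) → Prop
  | nil : IsBlockPath G u []
  | snoc {p r : List ((A ⊕ B) × G.V)} {a : A} {v : G.V} :
      IsBlockPath G u p → G.PathBA a (pathEnd u p) v r → IsBlockPath G u (p ++ r)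

namespace IsBlockPath

variable {G : LGraph (A ⊕ B)} {u : G.V} {p : List ((A ⊕ B) × G.V)}

theorem pathEnd_contractPath (h : IsBlockPath G u p) (w : G.V) :
    pathEnd w (contractPath p) = pathEnd w p := by
  cases h with
  | nil => rfl
  | snoc _ hr => rw [contractPath_append, hr.contractPath_eq, pathEnd_concat, pathEnd_append,
      hr.pathEnd_eq]

theorem isPathFrom_contractPath (h : IsBlockPath G u p) :
    G.contraction.IsPathFrom u (contractPath p) := by
  induction h with
  | nil => trivial
  | snoc hp hr ih =>
    -- `G.contraction.V` is `G.V` only after unfolding `contraction`, hence `erw` here and below.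
    erw [contractPath_append, hr.contractPath_eq, isPathFrom_concat, pathEnd_contractPath hp]
    exact ⟨ih, (G.contraction_edge_iff ..).2 ⟨_, hr⟩⟩

theorem exists_contractPath_eq {m : List (A × G.V)} (hm : G.contraction.IsPathFrom u m) :
    ∃ p, IsBlockPath G u p ∧ contractPath p = m := by
  induction m using List.reverseRecOn with
  | nil => exact ⟨[], nil, rfl⟩
  | append_singleton m s ih =>
    erw [isPathFrom_concat] at hm
    obtain ⟨p, hp, rfl⟩ := ih hm.1
    obtain ⟨r, hr⟩ := (G.contraction_edge_iff ..).1 hm.2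
    erw [pathEnd_contractPath hp] at hr
    exact ⟨p ++ r, hp.snoc hr, by rw [contractPath_append, hr.contractPath_eq]⟩

end IsBlockPath

def UniquePathBA (G : LGraph (A ⊕ B)) : Prop :=
  ∀ (a : A) (u v : G.V) (p q : List ((A ⊕ B) × G.V)),
    G.PathBA a u v p → G.PathBA a u v q → p = q

theorem UniquePathBA.eq_of_contractPath_eq {G : LGraph (A ⊕ B)} (huniq : G.UniquePathBA)
    {u : G.V} {p q : List ((A ⊕ B) × G.V)} (hp : IsBlockPath G u p) (hq : IsBlockPath G u q)
    (h : contractPath p = contractPath q) : p = q := by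
  induction hp generalizing q with
  | nil =>
    cases hq with
    | nil => rfl
    | snoc _ hr =>
      rw [contractPath_append, hr.contractPath_eq] at h
      nomatch (List.append_eq_nil_iff.1 h.symm).2
  | snoc hp hr ih =>
    cases hq with
    | nil =>
      rw [contractPath_append, hr.contractPath_eq] at h
      nomatch (List.append_eq_nil_iff.1 h).2
    | snoc hq hr' =>
      rw [contractPath_append, contractPath_append, hr.contractPath_eq, hr'.contractPath_eq] at h
      obtain ⟨hpq, hlast⟩ := List.append_inj' h rfl
      obtain ⟨rfl, rfl⟩ := Prod.ext_iff.1 (List.singleton_inj.1 hlast)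
      obtain rfl := ih hq hpq
      rw [huniq _ _ _ _ _ hr hr']

theorem contraction_unfold_reaches_root_iff (G : LGraph (A ⊕ B)) (p : List ((A ⊕ B) × G.V)) :
    G.unfold.contraction.Reaches G.unfold.contraction.root p ↔ IsBlockPath G G.root p := by
  constructor
  · intro h
    induction h with
    | refl => exact .nil
    | tail _ hstep ih =>
      obtain ⟨a, he⟩ := hstep
      obtain ⟨v, r, rfl, hr⟩ := (G.contraction_unfold_edge_iff _ _ a).1 he
      exact ih.snoc hr
  · intro h
    induction h with
    | nil => exact .refl
    | snoc _ hr ih =>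
      exact .tail ih ⟨_, (G.contraction_unfold_edge_iff _ _ _).2 ⟨_, _, rfl, hr⟩⟩

theorem UniquePathBA.contraction_unfold_edge_iff_contractPath {G : LGraph (A ⊕ B)}
    (huniq : G.UniquePathBA) {p q : List ((A ⊕ B) × G.V)} (hp : IsBlockPath G G.root p)
    (hq : IsBlockPath G G.root q) (a : A) :
    G.unfold.contraction.edge p a q ↔
      G.contraction.unfold.edge (contractPath p) a (contractPath q) := by
  have hend : G.contraction.endV (contractPath p) = G.endV p := hp.pathEnd_contractPath G.root
  rw [G.contraction_unfold_edge_iff]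
  constructor
  · rintro ⟨v, r, rfl, hr⟩
    refine ⟨v, ?_, ?_⟩
    · erw [contractPath_append, hr.contractPath_eq]; rfl
    · rw [hend]; exact (G.contraction_edge_iff ..).2 ⟨r, hr⟩
  · rintro ⟨v, hq', he⟩
    rw [hend] at he
    obtain ⟨r, hr⟩ := (G.contraction_edge_iff ..).1 he
    refine ⟨v, r, huniq.eq_of_contractPath_eq hq (hp.snoc hr) ?_, hr⟩
    erw [contractPath_append, hr.contractPath_eq, hq']; rfl

def contractRt (G : LGraph (A ⊕ B)) : G.unfold.contraction.Rt → G.contraction.unfold.Rt :=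
  fun x => ⟨contractPath x.1, (unfold_reaches_root_iff _ _).2
    ((G.contraction_unfold_reaches_root_iff _).1 x.2).isPathFrom_contractPath⟩

theorem UniquePathBA.contractRt_bijective {G : LGraph (A ⊕ B)} (huniq : G.UniquePathBA) :
    Function.Bijective G.contractRt := by
  constructor
  · intro x y hxy
    exact Subtype.ext <| huniq.eq_of_contractPath_eq
      ((G.contraction_unfold_reaches_root_iff _).1 x.2)
      ((G.contraction_unfold_reaches_root_iff _).1 y.2) (congrArg Subtype.val hxy)
  · rintro ⟨m, hm⟩
    obtain ⟨p, hp, rfl⟩ :=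
      IsBlockPath.exists_contractPath_eq ((G.contraction.unfold_reaches_root_iff m).1 hm)
    exact ⟨⟨p, (G.contraction_unfold_reaches_root_iff p).2 hp⟩, rfl⟩

end LGraph

theorem contraction_unfold_comm_general {A B : Type} (H : LGraph (A ⊕ B))
    (huniq : ∀ (a : A) (u v : H.V) (p q : List ((A ⊕ B) × H.V)),
      H.PathBA a u v p → H.PathBA a u v q → p = q) :
    LGraph.Isomorphic (LGraph.contraction (LGraph.unfold H))
      (LGraph.unfold (LGraph.contraction H)) :=
  have isBlockPath (x : H.unfold.contraction.Rt) : IsBlockPath H H.root x.1 :=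
    (H.contraction_unfold_reaches_root_iff _).1 x.2
  ⟨⟨Equiv.ofBijective _ (UniquePathBA.contractRt_bijective huniq), rfl, fun u v a =>
    UniquePathBA.contraction_unfold_edge_iff_contractPath huniq
      (isBlockPath u) (isBlockPath v) a⟩⟩

/-- Contraction commutes with unfolding under a uniqueness condition: if `H`
is a rooted graph labelled in `A ⊎ B` such that for every `a ∈ A` and any two
vertices `u`, `v` there is at most one path from `u` to `v` labelled by a
word in `B*a`, then the `B`-contraction of the unfolding of `H` is isomorphic
to the unfolding of the `B`-contraction of `H`. -/
theorem contraction_unfold_comm {A B : Type} (H : LGraph (A ⊕ B))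
    (hroot : ∀ v, H.Reaches H.root v)
    (huniq : ∀ (a : A) (u v : H.V) (p q : List ((A ⊕ B) × H.V)),
      H.PathBA a u v p → H.PathBA a u v q → p = q) :
    LGraph.Isomorphic (LGraph.contraction (LGraph.unfold H))
      (LGraph.unfold (LGraph.contraction H)) :=
  contraction_unfold_comm_general H huniq
end

section
/- For any graph G labelled in A ⊎ B with root r, the B-contraction of the unfolding Unf(G,r) is bisimilar to the unfolding from r of the B-contraction of G (even though they need not be isomorphic). -/
open LGraph

/-!
`p ↦ endV p` makes every unfolding bisimilar to its graph, and a bisimulation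
between two graphs is also one between their `B`-contractions, since it can be followed
along `B`-paths. Chaining `contraction (unfold G) ~ contraction G ~ unfold (contraction G)`
gives the theorem.
-/

namespace LGraph

variable {L A B : Type}

def IsSimulation (G H : LGraph L) (R : G.V → H.V → Prop) : Prop :=
  ∀ ⦃u u'⦄, R u u' → ∀ l v, G.edge u l v → ∃ v', H.edge u' l v' ∧ R v v'

theorem bisimilar_iff {G H : LGraph L} :
    G.Bisimilar H ↔ ∃ R, R G.root H.root ∧ G.IsSimulation H R ∧ H.IsSimulation G (flip R) :=
  exists_congr fun _ => and_congr_right fun _ => and_congr_right fun _ =>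
    ⟨fun h _ _ huu' => h _ _ huu', fun h _ _ huu' => h huu'⟩

theorem IsSimulation.comp {G H K : LGraph L} {R : G.V → H.V → Prop} {S : H.V → K.V → Prop}
    (hR : G.IsSimulation H R) (hS : H.IsSimulation K S) :
    G.IsSimulation K (Relation.Comp R S) := by
  rintro u u'' ⟨u', huu', hu'u''⟩ l v he
  obtain ⟨v', he', hvv'⟩ := hR huu' l v he
  obtain ⟨v'', he'', hv'v''⟩ := hS hu'u'' l v' he'
  exact ⟨v'', he'', v', hvv', hv'v''⟩

theorem Bisimilar.symm {G H : LGraph L} (h : G.Bisimilar H) : H.Bisimilar G := by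
  obtain ⟨R, hroot, hforth, hback⟩ := bisimilar_iff.mp h
  exact bisimilar_iff.mpr ⟨flip R, hroot, hback, hforth⟩

theorem Bisimilar.trans {G H K : LGraph L} (hGH : G.Bisimilar H) (hHK : H.Bisimilar K) :
    G.Bisimilar K := by
  obtain ⟨R, hR, hRf, hRb⟩ := bisimilar_iff.mp hGH
  obtain ⟨S, hS, hSf, hSb⟩ := bisimilar_iff.mp hHK
  refine bisimilar_iff.mpr ⟨Relation.Comp R S, ⟨H.root, hR, hS⟩, hRf.comp hSf, ?_⟩
  rw [Relation.flip_comp]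
  exact hSb.comp hRb

theorem IsSimulation.bStar {G H : LGraph (A ⊕ B)} {R : G.V → H.V → Prop}
    (hR : G.IsSimulation H R) {u w : G.V} {u' : H.V} (huu' : R u u') (huw : G.BStar u w) :
    ∃ w', H.BStar u' w' ∧ R w w' := by
  induction huw with
  | refl => exact ⟨u', .refl, huu'⟩
  | tail _ hstep ih =>
    obtain ⟨w', hw', hR'⟩ := ih
    obtain ⟨b, hb⟩ := hstep
    obtain ⟨v', he', hvv'⟩ := hR hR' _ _ hb
    exact ⟨v', hw'.tail ⟨b, he'⟩, hvv'⟩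

theorem IsSimulation.contraction {G H : LGraph (A ⊕ B)} {R : G.V → H.V → Prop}
    (hR : G.IsSimulation H R) : G.contraction.IsSimulation H.contraction R := by
  rintro u u' huu' a v ⟨w, huw, hwv⟩
  obtain ⟨w', hu'w', hww'⟩ := hR.bStar huu' huw
  obtain ⟨v', hw'v', hvv'⟩ := hR hww' _ _ hwv
  exact ⟨v', ⟨w', hu'w', hw'v'⟩, hvv'⟩

theorem Bisimilar.contraction {G H : LGraph (A ⊕ B)} (h : G.Bisimilar H) :
    G.contraction.Bisimilar H.contraction := by
  obtain ⟨R, hroot, hforth, hback⟩ := bisimilar_iff.mp h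
  exact bisimilar_iff.mpr ⟨R, hroot, hforth.contraction, hback.contraction⟩

theorem endV_append_singleton (G : LGraph L) (p : List (L × G.V)) (l : L) (v : G.V) :
    G.endV (p ++ [(l, v)]) = v := by
  simp [endV, List.foldl_append]

theorem unfold_bisimilar (G : LGraph L) : G.unfold.Bisimilar G := by
  refine ⟨fun p v => G.endV p = v, rfl, ?_, ?_⟩
  · rintro (p : List (L × G.V)) u rfl l _ ⟨v, rfl, he⟩
    exact ⟨v, he, endV_append_singleton G p l v⟩
  · rintro (p : List (L × G.V)) u rfl l v he
    exact ⟨p ++ [(l, v)], ⟨v, rfl, he⟩, endV_append_singleton G p l v⟩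

end LGraph

theorem contraction_unfold_bisimilar_general {A B : Type} (G : LGraph (A ⊕ B)) :
    LGraph.Bisimilar (LGraph.contraction (LGraph.unfold G))
      (LGraph.unfold (LGraph.contraction G)) :=
  (unfold_bisimilar G).contraction.trans (unfold_bisimilar G.contraction).symm

/-- For any rooted graph `G` labelled in `A ⊎ B`, the `B`-contraction of the
unfolding of `G` is bisimilar to the unfolding of the `B`-contraction of `G`
(even though they need not be isomorphic). -/
theorem contraction_unfold_bisimilar {A B : Type} (G : LGraph (A ⊕ B))
    (hroot : ∀ v, G.Reaches G.root v) :
    LGraph.Bisimilar (LGraph.contraction (LGraph.unfold G))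
      (LGraph.unfold (LGraph.contraction G)) :=
  contraction_unfold_bisimilar_general G
end
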